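/- Let 𝔠 ⊆ {−1,0,+1}^E be a ℤ₂-invariant simple collection of signed subsets of a finite set E with pairwise incomparable supports. If the oriented elimination property 𝒪ℰ(X, Y, 𝔠) holds for all X, Y ∈ 𝔠 whose supports form a modular pair in the set of supports, then the collection of supports {supp(X) : X ∈ 𝔠} is the set of circuits of a matroid on E. -/

import Mathlib

open Set

variable {α : Type*}

/-- The set `U(𝒞)` of all unions of subfamilies of `𝒞`, as a set of sets
(ordered by inclusion). -/
def unionsOf (𝒞 : Set (Set α)) : Set (Set α) := {Z | ∃ 𝒯 ⊆ 𝒞, Z = ⋃₀ 𝒯}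

/-- There is a strictly increasing chain of `n + 1` elements of `U`,
all contained in `Z` (i.e. a chain of length `n` in `U_{≤ Z}`). -/
def HasChainBelow (U : Set (Set α)) (Z : Set α) (n : ℕ) : Prop :=
  ∃ c : Fin (n + 1) → Set α, StrictMono c ∧ ∀ i, c i ∈ U ∧ c i ⊆ Z

/-- The maximal length of a chain in `U_{≤ Z}` is exactly `n`. -/
def LengthBelowEq (U : Set (Set α)) (Z : Set α) (n : ℕ) : Prop :=
  HasChainBelow U Z n ∧ ¬ HasChainBelow U Z (n + 1)

/-- `A, B ∈ 𝒞` are a modular pair: the interval below `A ∪ B` in the lattice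
`U(𝒞)` of unions of members of `𝒞` has length `2`. -/
def IsModularPair (𝒞 : Set (Set α)) (A B : Set α) : Prop :=
  LengthBelowEq (unionsOf 𝒞) (A ∪ B) 2

/-- The elimination property `ℰ(A, B, 𝒞)`. -/
def Elim (𝒞 : Set (Set α)) (A B : Set α) : Prop :=
  ∀ e ∈ A ∩ B, ∃ C ∈ 𝒞, C ⊆ (A ∪ B) \ {e}

/-- The members of `𝒞` are pairwise incomparable under inclusion. -/
def PairwiseIncomparable (𝒞 : Set (Set α)) : Prop :=
  ∀ A ∈ 𝒞, ∀ B ∈ 𝒞, A ⊆ B → A = B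

/-- `𝒞` is the set of circuits of a matroid with ground set `E`
(circuits = minimal dependent sets). -/
def IsCircuitSetOf (𝒞 : Set (Set α)) (E : Set α) : Prop :=
  ∃ M : Matroid α, M.E = E ∧ ∀ C : Set α, Minimal M.Dep C ↔ C ∈ 𝒞

/-- The support of a signed subset `X : α → SignType`. -/
def sSupp (X : α → SignType) : Set α := {e | X e ≠ 0}

/-- `𝔠` is invariant under the `ℤ₂`-action of switching signs. -/
def Z2Invariant (𝔠 : Set (α → SignType)) : Prop :=
  ∀ X ∈ 𝔠, (fun e => -(X e)) ∈ 𝔠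

/-- `𝔠` is simple: equal supports force equality up to global sign. -/
def SimpleFam (𝔠 : Set (α → SignType)) : Prop :=
  ∀ X ∈ 𝔠, ∀ Y ∈ 𝔠, sSupp X = sSupp Y → X = Y ∨ X = fun e => -(Y e)

/-- The oriented elimination property `𝒪ℰ(X, Y, 𝔠)`. -/
def OElim (𝔠 : Set (α → SignType)) (X Y : α → SignType) : Prop :=
  ∀ e f : α, X e = -(Y e) → X e ≠ 0 → X f ≠ Y f →
    ∃ Z ∈ 𝔠, Z e = 0 ∧ Z f ≠ 0 ∧ ∀ g : α, Z g = 0 ∨ Z g = X g ∨ Z g = Y g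


/-!
Circuit elimination for an arbitrary pair `A ≠ B` reduces to modular pairs by induction on
`|A ∪ B|`. If `A, B` is not modular, then besides `∅ ⊂ A ⊂ A ∪ B` the lattice of unions has a
chain of length `3` below `A ∪ B`; its first two steps produce distinct circuits `D₁, D₂` with
`D₁ ∪ D₂ ⊂ A ∪ B`. Unless some circuit inside `A ∪ B` already avoids `e`, both contain `e`, and
eliminating `e` from them is the induction hypothesis. For a modular pair of supports,
oriented elimination applied to `X` and to whichever of `±Y` has the opposite sign at `e`
produces the circuit. Finally, the circuit axioms give a matroid whose independent sets are
the circuit-free subsets of `E`.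
-/

section CircuitAxioms

variable {𝒞 : Set (Set α)}

def CircuitFree (𝒞 : Set (Set α)) (I : Set α) : Prop :=
  ∀ C ∈ 𝒞, ¬ C ⊆ I

lemma CircuitFree.subset {I J : Set α} (hJ : CircuitFree 𝒞 J) (hIJ : I ⊆ J) :
    CircuitFree 𝒞 I :=
  fun C hC hCI => hJ C hC (hCI.trans hIJ)

lemma circuitFree_empty (hne : ∀ C ∈ 𝒞, C.Nonempty) : CircuitFree 𝒞 ∅ :=
  fun C hC h => (hne C hC).ne_empty (subset_empty_iff.mp h)

/-- The exchange step of the augmentation axiom: if every exchange of some `y ∈ K \ I` for `x`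
created a circuit `C_y ∋ x` missing `y`, then `C_y` would meet `K \ I` in some `z`, and
eliminating `x` from `C_y ≠ C_z` would leave a circuit inside `K`. -/
lemma CircuitFree.exists_exchange (helim : ∀ A ∈ 𝒞, ∀ B ∈ 𝒞, A ≠ B → Elim 𝒞 A B)
    {I K : Set α} {x : α} (hK : CircuitFree 𝒞 K) (hI : CircuitFree 𝒞 I) (hxI : x ∈ I)
    (hxK : x ∉ K) (hKI : (K \ I).Nonempty) :
    ∃ y ∈ K \ I, CircuitFree 𝒞 (insert x (K \ {y})) := by
  by_contra! hdep
  have hcirc : ∀ y ∈ K \ I, ∃ C ∈ 𝒞, C ⊆ insert x (K \ {y}) ∧ x ∈ C ∧ y ∉ C := by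
    intro y hy
    obtain ⟨C, hC, hCsub⟩ : ∃ C ∈ 𝒞, C ⊆ insert x (K \ {y}) := by
      simpa [CircuitFree] using hdep y hy
    refine ⟨C, hC, hCsub, ?_, fun hyC => ?_⟩
    · by_contra hxC
      exact hK C hC fun z hz => ((hCsub hz).resolve_left (by rintro rfl; exact hxC hz)).1
    · rcases hCsub hyC with rfl | h
      · exact hy.2 hxI
      · exact h.2 rfl
  obtain ⟨y, hy⟩ := hKI
  obtain ⟨C, hC, hCsub, hxC, -⟩ := hcirc y hy
  obtain ⟨z, hzC, hz⟩ : ∃ z ∈ C, z ∈ K \ I := by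
    by_contra! h
    refine hI C hC fun z hzC => ?_
    rcases hCsub hzC with rfl | hzK
    · exact hxI
    · exact not_not.mp fun hzI => h z hzC ⟨hzK.1, hzI⟩
  obtain ⟨C', hC', hC'sub, hxC', hzC'⟩ := hcirc z hz
  obtain ⟨D, hD, hDsub⟩ := helim C hC C' hC' (by rintro rfl; exact hzC' hzC) x ⟨hxC, hxC'⟩
  have hCC' : C ∪ C' ⊆ insert x K :=
    union_subset (hCsub.trans (insert_subset_insert sdiff_subset))
      (hC'sub.trans (insert_subset_insert sdiff_subset))
  exact hK D hD fun w hw => ((hCC' (hDsub hw).1).resolve_left (hDsub hw).2)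

lemma exists_insert_circuitFree_of_ncard_lt (helim : ∀ A ∈ 𝒞, ∀ B ∈ 𝒞, A ≠ B → Elim 𝒞 A B)
    {I J : Set α} (hIfin : I.Finite) (hI : CircuitFree 𝒞 I)
    (hJ : CircuitFree 𝒞 J) (hlt : I.ncard < J.ncard) :
    ∃ e ∈ J, e ∉ I ∧ CircuitFree 𝒞 (insert e I) := by
  suffices ∀ n, ∀ K ⊆ I ∪ J, CircuitFree 𝒞 K → I.ncard < K.ncard → (I \ K).ncard = n →
      ∃ e ∈ J, e ∉ I ∧ CircuitFree 𝒞 (insert e I) from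
    this _ J subset_union_right hJ hlt rfl
  intro n
  induction n using Nat.strong_induction_on with
  | _ n ih =>
  rintro K hKIJ hK hIK rfl
  have hKI : ¬ K ⊆ I := fun h => (ncard_le_ncard h hIfin).not_gt hIK
  by_cases hIK' : I ⊆ K
  · obtain ⟨e, heK, heI⟩ := not_subset.mp hKI
    exact ⟨e, (hKIJ heK).resolve_left heI, heI, hK.subset (insert_subset heK hIK')⟩
  obtain ⟨x, hxI, hxK⟩ := not_subset.mp hIK'
  obtain ⟨y, ⟨hyK, hyI⟩, hK'⟩ :=
    hK.exists_exchange helim hI hxI hxK (sdiff_nonempty.mpr hKI)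
  have hdiff : I \ insert x (K \ {y}) = (I \ K) \ {x} := by
    ext z
    simp only [mem_sdiff, mem_insert_iff, mem_singleton_iff]
    constructor
    · rintro ⟨hzI, hz⟩
      exact ⟨⟨hzI, fun hzK => hz (Or.inr ⟨hzK, by rintro rfl; exact hyI hzI⟩)⟩,
        fun hzx => hz (Or.inl hzx)⟩
    · rintro ⟨⟨hzI, hzK⟩, hzx⟩
      exact ⟨hzI, by rintro (h | h); exacts [hzx h, hzK h.1]⟩
  refine ih _ ?_ _ ?_ hK' ?_ rfl
  · rw [hdiff]
    exact ncard_sdiff_singleton_lt_of_mem ⟨hxI, hxK⟩ hIfin.sdiff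
  · exact insert_subset (Or.inl hxI) (sdiff_subset.trans hKIJ)
  · rwa [ncard_exchange hxK hyK]

lemma PairwiseIncomparable.minimal_iff_mem {E : Set α} (hinc : PairwiseIncomparable 𝒞)
    (hsub : ∀ C ∈ 𝒞, C ⊆ E) {C : Set α} :
    Minimal (fun D => D ⊆ E ∧ ∃ C' ∈ 𝒞, C' ⊆ D) C ↔ C ∈ 𝒞 := by
  constructor
  · rintro ⟨⟨-, D, hD, hDC⟩, hmin⟩
    rwa [subset_antisymm hDC (hmin ⟨hsub D hD, D, hD, subset_rfl⟩ hDC)] at hD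
  · intro hC
    refine ⟨⟨hsub C hC, C, hC, subset_rfl⟩, fun D ⟨_, D', hD', hD'D⟩ hDC => ?_⟩
    rwa [hinc D' hD' C hC (hD'D.trans hDC)] at hD'D

theorem isCircuitSetOf_of_elim {E : Set α} (hE : E.Finite) (hne : ∀ C ∈ 𝒞, C.Nonempty)
    (hsub : ∀ C ∈ 𝒞, C ⊆ E) (hinc : PairwiseIncomparable 𝒞)
    (helim : ∀ A ∈ 𝒞, ∀ B ∈ 𝒞, A ≠ B → Elim 𝒞 A B) :
    IsCircuitSetOf 𝒞 E := by
  let M := (IndepMatroid.ofFinite hE (fun I => I ⊆ E ∧ CircuitFree 𝒞 I)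
    ⟨empty_subset E, circuitFree_empty hne⟩
    (fun _ _ hJ hIJ => ⟨hIJ.trans hJ.1, hJ.2.subset hIJ⟩)
    (fun I J hI hJ hlt => by
      obtain ⟨e, heJ, heI, he⟩ := exists_insert_circuitFree_of_ncard_lt helim
        (hE.subset hI.1) hI.2 hJ.2 hlt
      exact ⟨e, heJ, heI, insert_subset (hJ.1 heJ) hI.1, he⟩)
    (fun _ hI => hI.1)).matroid
  have hdep : M.Dep = fun D => D ⊆ E ∧ ∃ C ∈ 𝒞, C ⊆ D := by
    ext D
    simp +contextual [M, Matroid.Dep, CircuitFree, and_comm]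
  exact ⟨M, rfl, fun C => hdep ▸ hinc.minimal_iff_mem hsub⟩

end CircuitAxioms

section ModularPairs

variable {𝒞 : Set (Set α)}

lemma exists_mem_subset_of_mem_unionsOf {Z : Set α} (hZ : Z ∈ unionsOf 𝒞) {x : α}
    (hx : x ∈ Z) : ∃ D ∈ 𝒞, x ∈ D ∧ D ⊆ Z := by
  obtain ⟨𝒯, h𝒯, rfl⟩ := hZ
  obtain ⟨D, hD, hxD⟩ := hx
  exact ⟨D, h𝒯 hD, hxD, subset_sUnion_of_mem hD⟩

lemma hasChainBelow_two {A B : Set α} (hA : A ∈ 𝒞) (hB : B ∈ 𝒞) (hAne : A.Nonempty)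
    (hBA : ¬ B ⊆ A) : HasChainBelow (unionsOf 𝒞) (A ∪ B) 2 := by
  refine ⟨![∅, A, A ∪ B], ?_, ?_⟩
  · rw [Fin.strictMono_iff_lt_succ]
    intro i
    fin_cases i
    · exact empty_ssubset.mpr hAne
    · show A ⊂ A ∪ B
      exact ssubset_iff_subset_ne.mpr
        ⟨subset_union_left, fun h => hBA (h ▸ subset_union_right)⟩
  · intro i
    fin_cases i
    · exact ⟨⟨∅, empty_subset _, sUnion_empty.symm⟩, empty_subset _⟩
    · exact ⟨⟨{A}, singleton_subset_iff.mpr hA, (sUnion_singleton A).symm⟩, subset_union_left⟩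
    · exact ⟨⟨{A, B}, pair_subset hA hB, (sUnion_pair A B).symm⟩, subset_rfl⟩

lemma exists_ne_union_ssubset_of_hasChainBelow_three {Z : Set α}
    (h : HasChainBelow (unionsOf 𝒞) Z 3) :
    ∃ D₁ ∈ 𝒞, ∃ D₂ ∈ 𝒞, D₁ ≠ D₂ ∧ D₁ ∪ D₂ ⊂ Z := by
  obtain ⟨c, hc, hcmem⟩ := h
  have h01 : c 0 < c 1 := hc (by decide)
  have h12 : c 1 < c 2 := hc (by decide)
  have h2Z : c 2 ⊂ Z := (hc (show (2 : Fin 4) < 3 by decide)).trans_le (hcmem 3).2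
  obtain ⟨w, hw, -⟩ := exists_of_ssubset h01
  obtain ⟨x, hx, hx1⟩ := exists_of_ssubset h12
  obtain ⟨D₁, hD₁, -, hD₁c⟩ := exists_mem_subset_of_mem_unionsOf (hcmem 1).1 hw
  obtain ⟨D₂, hD₂, hxD₂, hD₂c⟩ := exists_mem_subset_of_mem_unionsOf (hcmem 2).1 hx
  refine ⟨D₁, hD₁, D₂, hD₂, fun h => hx1 (hD₁c (h ▸ hxD₂)), ?_⟩
  exact (union_subset (hD₁c.trans h12.le) hD₂c).trans_ssubset h2Z

theorem elim_of_elim_isModularPair (hfin : ∀ C ∈ 𝒞, C.Finite) (hne : ∀ C ∈ 𝒞, C.Nonempty)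
    (hinc : PairwiseIncomparable 𝒞)
    (hmod : ∀ A ∈ 𝒞, ∀ B ∈ 𝒞, A ≠ B → IsModularPair 𝒞 A B → Elim 𝒞 A B)
    {A B : Set α} (hA : A ∈ 𝒞) (hB : B ∈ 𝒞) (hAB : A ≠ B) : Elim 𝒞 A B := by
  induction hn : (A ∪ B).ncard using Nat.strong_induction_on generalizing A B with
  | _ n ih =>
  by_cases hAB_mod : IsModularPair 𝒞 A B
  · exact hmod A hA B hB hAB hAB_mod
  have h3 : HasChainBelow (unionsOf 𝒞) (A ∪ B) 3 := by
    by_contra h3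
    exact hAB_mod
      ⟨hasChainBelow_two hA hB (hne A hA) fun h => hAB (hinc B hB A hA h).symm, h3⟩
  obtain ⟨D₁, hD₁, D₂, hD₂, hD₁₂, hD⟩ := exists_ne_union_ssubset_of_hasChainBelow_three h3
  intro e he
  by_cases havoid : ∃ C ∈ 𝒞, C ⊆ A ∪ B ∧ e ∉ C
  · obtain ⟨C, hC, hCAB, heC⟩ := havoid
    exact ⟨C, hC, subset_sdiff_singleton hCAB heC⟩
  push Not at havoid
  have hlt : (D₁ ∪ D₂).ncard < n := hn ▸ ncard_lt_ncard hD ((hfin A hA).union (hfin B hB))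
  obtain ⟨C, hC, hCsub⟩ := ih _ hlt hD₁ hD₂ hD₁₂ rfl e
    ⟨havoid D₁ hD₁ (subset_union_left.trans hD.subset),
      havoid D₂ hD₂ (subset_union_right.trans hD.subset)⟩
  exact ⟨C, hC, hCsub.trans (sdiff_subset_sdiff_left hD.subset)⟩

end ModularPairs

lemma sSupp_neg (X : α → SignType) : sSupp (fun e => -(X e)) = sSupp X := by
  ext
  simp [sSupp]

lemma elim_sSupp_of_oElim {𝔠 : Set (α → SignType)} {X Y : α → SignType}
    (hXY : ¬ sSupp X ⊆ sSupp Y) (hoe : OElim 𝔠 X Y) (hoe_neg : OElim 𝔠 X fun e => -(Y e)) :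
    Elim {S | ∃ W ∈ 𝔠, S = sSupp W} (sSupp X) (sSupp Y) := by
  obtain ⟨f, hfX, hfY⟩ := not_subset.mp hXY
  rintro e ⟨heX, heY⟩
  obtain ⟨Y', hY'supp, hoe', hXY'e⟩ :
      ∃ Y', sSupp Y' = sSupp Y ∧ OElim 𝔠 X Y' ∧ X e = -(Y' e) := by
    by_cases h : X e = -(Y e)
    · exact ⟨Y, rfl, hoe, h⟩
    · have sign_eq : ∀ a b : SignType, a ≠ 0 → b ≠ 0 → a ≠ -b → a = - -b := by decide
      exact ⟨_, sSupp_neg Y, hoe_neg, sign_eq _ _ heX heY h⟩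
  have hY'f : f ∉ sSupp Y' := hY'supp ▸ hfY
  have hXY'f : X f ≠ Y' f := by
    rw [show Y' f = 0 from not_not.mp hY'f]
    exact hfX
  obtain ⟨Z, hZ, hZe, -, hZg⟩ := hoe' e f hXY'e heX hXY'f
  refine ⟨sSupp Z, ⟨Z, hZ, rfl⟩, fun g hg => ⟨?_, fun he => hg (he ▸ hZe)⟩⟩
  rcases hZg g with h | h | h
  · exact absurd h hg
  · exact Or.inl fun h0 => hg (h.trans h0)
  · exact Or.inr (hY'supp ▸ fun h0 => hg (h.trans h0))

theorem supports_circuitSet_of_modular_oelim_general (E : Set α) (hE : E.Finite)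
    (𝔠 : Set (α → SignType))
    (hsub : ∀ X ∈ 𝔠, sSupp X ⊆ E)
    (hne : ∀ X ∈ 𝔠, (sSupp X).Nonempty)
    (hinc : PairwiseIncomparable {S | ∃ X ∈ 𝔠, S = sSupp X})
    (hZ2 : Z2Invariant 𝔠)
    (hmod : ∀ X ∈ 𝔠, ∀ Y ∈ 𝔠,
      IsModularPair {S | ∃ W ∈ 𝔠, S = sSupp W} (sSupp X) (sSupp Y) →
      OElim 𝔠 X Y) :
    IsCircuitSetOf {S | ∃ X ∈ 𝔠, S = sSupp X} E := by
  have hsub' : ∀ C ∈ {S | ∃ X ∈ 𝔠, S = sSupp X}, C ⊆ E := by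
    rintro _ ⟨X, hX, rfl⟩
    exact hsub X hX
  have hne' : ∀ C ∈ {S | ∃ X ∈ 𝔠, S = sSupp X}, C.Nonempty := by
    rintro _ ⟨X, hX, rfl⟩
    exact hne X hX
  refine isCircuitSetOf_of_elim hE hne' hsub' hinc fun A hA B hB hAB =>
    elim_of_elim_isModularPair (fun C hC => hE.subset (hsub' C hC)) hne' hinc ?_ hA hB hAB
  rintro _ ⟨X, hX, rfl⟩ _ ⟨Y, hY, rfl⟩ hXY hXY_mod
  refine elim_sSupp_of_oElim (fun h => hXY (hinc _ ⟨X, hX, rfl⟩ _ ⟨Y, hY, rfl⟩ h))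
    (hmod X hX Y hY hXY_mod) (hmod X hX _ (hZ2 Y hY) ?_)
  rwa [sSupp_neg]

/-- **Corollary (oriented matroids).** If a `ℤ₂`-invariant simple collection of
signed subsets of a finite set `E` with pairwise incomparable (nonempty)
supports satisfies oriented elimination for all pairs whose supports form a
modular pair, then the collection of supports is the set of circuits of a
matroid on `E`. -/
theorem supports_circuitSet_of_modular_oelim (E : Set α) (hE : E.Finite)
    (𝔠 : Set (α → SignType))
    (hsub : ∀ X ∈ 𝔠, sSupp X ⊆ E)
    (hne : ∀ X ∈ 𝔠, (sSupp X).Nonempty)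
    (hinc : PairwiseIncomparable {S | ∃ X ∈ 𝔠, S = sSupp X})
    (hZ2 : Z2Invariant 𝔠) (hsimple : SimpleFam 𝔠)
    (hmod : ∀ X ∈ 𝔠, ∀ Y ∈ 𝔠,
      IsModularPair {S | ∃ W ∈ 𝔠, S = sSupp W} (sSupp X) (sSupp Y) →
      OElim 𝔠 X Y) :
    IsCircuitSetOf {S | ∃ X ∈ 𝔠, S = sSupp X} E :=
  supports_circuitSet_of_modular_oelim_general E hE 𝔠 hsub hne hinc hZ2 hmod
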